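/- arXiv:2202.13234 — 4 statements merged into one kernel-verified Lean document; each statement's English description precedes it below -/
import Mathlib

section
/- For any fixed probability vector π_e positive on the support of π_Δ, the function (r, σ) ↦ ∑_a π_Δ(a)²/π_e(a) (σ_a² + r_a²) − (∑_a π_Δ(a) r_a)² over the instance set {0 ≤ r_a ≤ 1, 0 ≤ σ_a ≤ σ} attains its maximum at r_a = 1 for all a and σ_a = σ for all a, where the maximum value is (σ² + 1) ∑_a π_Δ(a)²/π_e(a). -/
open Finset

lemma sum_mul_sq_add_sq_le {ι : Type*} (s : Finset ι) (w x y : ι → ℝ) (M : ℝ)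
    (hw : ∀ a ∈ s, 0 ≤ w a) (hx : ∀ a ∈ s, 0 ≤ x a ∧ x a ≤ 1)
    (hy : ∀ a ∈ s, 0 ≤ y a ∧ y a ≤ M) :
    ∑ a ∈ s, w a * (y a ^ 2 + x a ^ 2) ≤ (M ^ 2 + 1) * ∑ a ∈ s, w a := by
  rw [mul_sum]
  refine sum_le_sum fun a ha => ?_
  obtain ⟨hx0, hx1⟩ := hx a ha
  obtain ⟨hy0, hyM⟩ := hy a ha
  rw [mul_comm (M ^ 2 + 1)]
  have hyM2 : y a ^ 2 ≤ M ^ 2 := pow_le_pow_left₀ hy0 hyM 2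
  have hx12 : x a ^ 2 ≤ 1 := pow_le_one₀ hx0 hx1
  exact mul_le_mul_of_nonneg_left (add_le_add hyM2 hx12) (hw a ha)

theorem stmt8_general (K : ℕ) (σmax : ℝ)
    (π1 π0 : Fin K → ℝ)
    (hπ1sum : (∑ a, π1 a) = 1)
    (hπ0sum : (∑ a, π0 a) = 1)
    (πΔ : Fin K → ℝ) (hπΔ : ∀ a, πΔ a = π1 a - π0 a)
    (πe : Fin K → ℝ)
    (hpos : ∀ a, πΔ a ≠ 0 → 0 < πe a) :
    (∀ r σ : Fin K → ℝ, (∀ a, 0 ≤ r a ∧ r a ≤ 1) →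
        (∀ a, 0 ≤ σ a ∧ σ a ≤ σmax) →
        (∑ a ∈ univ.filter (fun a => πΔ a ≠ 0),
            (πΔ a) ^ 2 / πe a * ((σ a) ^ 2 + (r a) ^ 2))
          - (∑ a, πΔ a * r a) ^ 2
        ≤ (σmax ^ 2 + 1) * ∑ a ∈ univ.filter (fun a => πΔ a ≠ 0), (πΔ a) ^ 2 / πe a) ∧
    (∑ a ∈ univ.filter (fun a => πΔ a ≠ 0),
        (πΔ a) ^ 2 / πe a * (σmax ^ 2 + (1 : ℝ) ^ 2))
      - (∑ a, πΔ a * (1 : ℝ)) ^ 2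
      = (σmax ^ 2 + 1) * ∑ a ∈ univ.filter (fun a => πΔ a ≠ 0), (πΔ a) ^ 2 / πe a := by
  refine ⟨fun r σ hr hσ => ?_, ?_⟩
  · have hw : ∀ a ∈ univ.filter (fun a => πΔ a ≠ 0), 0 ≤ πΔ a ^ 2 / πe a :=
      fun a ha => div_nonneg (sq_nonneg _) (hpos a (mem_filter.1 ha).2).le
    calc _ ≤ ∑ a ∈ univ.filter (fun a => πΔ a ≠ 0), πΔ a ^ 2 / πe a * (σ a ^ 2 + r a ^ 2) :=
          sub_le_self _ (sq_nonneg _)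
      _ ≤ _ := sum_mul_sq_add_sq_le _ _ r σ σmax hw (fun a _ => hr a) (fun a _ => hσ a)
  · have hΔ : ∑ a, πΔ a = 0 := by
      simp only [hπΔ, sum_sub_distrib, hπ1sum, hπ0sum, sub_self]
    simp only [one_pow, mul_one, hΔ]
    rw [← sum_mul]
    ring

/-- For fixed `π_e`, the map `(r, σ) ↦ ∑_a π_Δ(a)²/π_e(a)(σ_a² + r_a²)
− (∑_a π_Δ(a) r_a)²` over the box `0 ≤ r ≤ 1`, `0 ≤ σ_a ≤ σmax` is maximized
at `r ≡ 1`, `σ ≡ σmax`, with maximum value `(σmax² + 1) ∑_a π_Δ(a)²/π_e(a)`. -/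
theorem stmt8 (K : ℕ) (σmax : ℝ) (hσ : 0 < σmax)
    (π1 π0 : Fin K → ℝ)
    (hπ1 : ∀ a, 0 ≤ π1 a) (hπ1sum : (∑ a, π1 a) = 1)
    (hπ0 : ∀ a, 0 ≤ π0 a) (hπ0sum : (∑ a, π0 a) = 1)
    (πΔ : Fin K → ℝ) (hπΔ : ∀ a, πΔ a = π1 a - π0 a)
    (πe : Fin K → ℝ) (hπe0 : ∀ a, 0 ≤ πe a) (hπesum : (∑ a, πe a) = 1)
    (hpos : ∀ a, πΔ a ≠ 0 → 0 < πe a) :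
    (∀ r σ : Fin K → ℝ, (∀ a, 0 ≤ r a ∧ r a ≤ 1) →
        (∀ a, 0 ≤ σ a ∧ σ a ≤ σmax) →
        (∑ a ∈ univ.filter (fun a => πΔ a ≠ 0),
            (πΔ a) ^ 2 / πe a * ((σ a) ^ 2 + (r a) ^ 2))
          - (∑ a, πΔ a * r a) ^ 2
        ≤ (σmax ^ 2 + 1) * ∑ a ∈ univ.filter (fun a => πΔ a ≠ 0), (πΔ a) ^ 2 / πe a) ∧
    (∑ a ∈ univ.filter (fun a => πΔ a ≠ 0),
        (πΔ a) ^ 2 / πe a * (σmax ^ 2 + (1 : ℝ) ^ 2))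
      - (∑ a, πΔ a * (1 : ℝ)) ^ 2
      = (σmax ^ 2 + 1) * ∑ a ∈ univ.filter (fun a => πΔ a ≠ 0), (πΔ a) ^ 2 / πe a :=
  stmt8_general K σmax π1 π0 hπ1sum hπ0sum πΔ hπΔ πe hpos
end

section
/- Let π_e* be the minimizer of ∑_a π_Δ(a)²/π_e(a) over a convex feasible set Π of probability vectors positive on the support of π_Δ. Then π_e* is minimax optimal: π_e* minimizes over π_e ∈ Π the quantity max over instances (r,σ) ∈ [0,1]^K × [0,σ]^K of ν(π_e; r, σ) := ∑_a π_Δ(a)²/π_e(a)(σ_a² + r_a²) − (∑_a π_Δ(a) r_a)². -/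
/-!
On the box `[0,1]^K × [0,σmax]^K` the variance `ν(π_e; r, σ)` is maximised at `r ≡ 1`, `σ ≡ σmax`:
each weighted term is at most `(σmax² + 1) π_Δ(a)²/π_e(a)`, the subtracted square is nonnegative,
and it vanishes at `r ≡ 1` because `∑_a π_Δ(a) = 0`. So the worst-case variance equals
`(σmax² + 1) ∑_a π_Δ(a)²/π_e(a)`, a monotone function of the surrogate that `π_e*` minimises.
-/

open Finset

namespace MinimaxDesign

variable {ι : Type*} [Fintype ι]

noncomputable def surrogate (w π : ι → ℝ) : ℝ :=
  ∑ a ∈ univ.filter (fun a => w a ≠ 0), w a ^ 2 / π a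

noncomputable def estimatorVariance (w π r σ : ι → ℝ) : ℝ :=
  (∑ a ∈ univ.filter (fun a => w a ≠ 0), w a ^ 2 / π a * (σ a ^ 2 + r a ^ 2))
    - (∑ a, w a * r a) ^ 2

def instanceBoxValues (f : (ι → ℝ) → (ι → ℝ) → ℝ) (σmax : ℝ) : Set ℝ :=
  {v | ∃ r σ : ι → ℝ, (∀ a, 0 ≤ r a ∧ r a ≤ 1) ∧ (∀ a, 0 ≤ σ a ∧ σ a ≤ σmax) ∧ v = f r σ}

theorem estimatorVariance_le {w π r σ : ι → ℝ} {σmax : ℝ} (hπ : ∀ a, 0 ≤ π a)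
    (hr : ∀ a, 0 ≤ r a ∧ r a ≤ 1) (hσ : ∀ a, 0 ≤ σ a ∧ σ a ≤ σmax) :
    estimatorVariance w π r σ ≤ surrogate w π * (σmax ^ 2 + 1) := by
  have hterm : ∀ a, σ a ^ 2 + r a ^ 2 ≤ σmax ^ 2 + 1 := fun a => by
    obtain ⟨hσ0, hσ1⟩ := hσ a
    obtain ⟨hr0, hr1⟩ := hr a
    nlinarith
  calc estimatorVariance w π r σ
      ≤ ∑ a ∈ univ.filter (fun a => w a ≠ 0), w a ^ 2 / π a * (σ a ^ 2 + r a ^ 2) :=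
        sub_le_self _ (sq_nonneg _)
    _ ≤ ∑ a ∈ univ.filter (fun a => w a ≠ 0), w a ^ 2 / π a * (σmax ^ 2 + 1) :=
        sum_le_sum fun a _ =>
          mul_le_mul_of_nonneg_left (hterm a) (div_nonneg (sq_nonneg _) (hπ a))
    _ = surrogate w π * (σmax ^ 2 + 1) := (sum_mul ..).symm

theorem estimatorVariance_one_const {w π : ι → ℝ} (hw : ∑ a, w a = 0) (σmax : ℝ) :
    estimatorVariance w π (fun _ => 1) (fun _ => σmax) = surrogate w π * (σmax ^ 2 + 1) := by
  simp only [estimatorVariance, surrogate, one_pow, mul_one, hw, sum_mul]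
  ring

theorem isGreatest_instanceBoxValues {w π : ι → ℝ} {σmax : ℝ} (hw : ∑ a, w a = 0)
    (hπ : ∀ a, 0 ≤ π a) (hσmax : 0 ≤ σmax) :
    IsGreatest (instanceBoxValues (estimatorVariance w π) σmax)
      (surrogate w π * (σmax ^ 2 + 1)) := by
  refine ⟨⟨_, _, fun _ => ⟨zero_le_one, le_rfl⟩, fun _ => ⟨hσmax, le_rfl⟩,
    (estimatorVariance_one_const hw σmax).symm⟩, ?_⟩
  rintro v ⟨r, σ, hr, hσ, rfl⟩
  exact estimatorVariance_le hπ hr hσ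

theorem sSup_instanceBoxValues {w π : ι → ℝ} {σmax : ℝ} (hw : ∑ a, w a = 0)
    (hπ : ∀ a, 0 ≤ π a) (hσmax : 0 ≤ σmax) :
    sSup (instanceBoxValues (estimatorVariance w π) σmax) = surrogate w π * (σmax ^ 2 + 1) :=
  (isGreatest_instanceBoxValues hw hπ hσmax).csSup_eq

end MinimaxDesign

open MinimaxDesign

theorem stmt9_general (K : ℕ) (σmax : ℝ) (hσ : 0 < σmax)
    (π1 π0 : Fin K → ℝ)
    (hπ1sum : (∑ a, π1 a) = 1)
    (hπ0sum : (∑ a, π0 a) = 1)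
    (πΔ : Fin K → ℝ) (hπΔ : ∀ a, πΔ a = π1 a - π0 a)
    (Pi : Set (Fin K → ℝ))
    (hPi : ∀ πe ∈ Pi, (∀ a, 0 ≤ πe a) ∧ (∑ a, πe a) = 1 ∧
      ∀ a, πΔ a ≠ 0 → 0 < πe a)
    (ν : (Fin K → ℝ) → (Fin K → ℝ) → (Fin K → ℝ) → ℝ)
    (hν : ∀ πe r σ, ν πe r σ =
      (∑ a ∈ univ.filter (fun a => πΔ a ≠ 0),
          (πΔ a) ^ 2 / πe a * ((σ a) ^ 2 + (r a) ^ 2))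
        - (∑ a, πΔ a * r a) ^ 2)
    (πestar : Fin K → ℝ) (hstar : πestar ∈ Pi)
    (hmin : ∀ πe ∈ Pi,
      (∑ a ∈ univ.filter (fun a => πΔ a ≠ 0), (πΔ a) ^ 2 / πestar a)
        ≤ ∑ a ∈ univ.filter (fun a => πΔ a ≠ 0), (πΔ a) ^ 2 / πe a) :
    ∀ πe ∈ Pi,
      sSup {v : ℝ | ∃ r σ : Fin K → ℝ, (∀ a, 0 ≤ r a ∧ r a ≤ 1) ∧
          (∀ a, 0 ≤ σ a ∧ σ a ≤ σmax) ∧ v = ν πestar r σ}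
        ≤ sSup {v : ℝ | ∃ r σ : Fin K → ℝ, (∀ a, 0 ≤ r a ∧ r a ≤ 1) ∧
          (∀ a, 0 ≤ σ a ∧ σ a ≤ σmax) ∧ v = ν πe r σ} := by
  intro πe hπe
  obtain rfl : ν = estimatorVariance πΔ := funext fun πe => funext fun r => funext (hν πe r)
  have hΔsum : ∑ a, πΔ a = 0 := by
    simp only [hπΔ, sum_sub_distrib, hπ1sum, hπ0sum, sub_self]
  change sSup (instanceBoxValues _ σmax) ≤ sSup (instanceBoxValues _ σmax)
  rw [sSup_instanceBoxValues hΔsum (hPi _ hstar).1 hσ.le,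
    sSup_instanceBoxValues hΔsum (hPi _ hπe).1 hσ.le]
  exact mul_le_mul_of_nonneg_right (hmin πe hπe) (by positivity)

/-- Minimax optimality: if `π_e*` minimizes the surrogate
`∑_a π_Δ(a)²/π_e(a)` over a feasible set `Π`, then it minimizes the
worst-case variance `sup_{(r,σ) ∈ [0,1]^K × [0,σmax]^K} ν(π_e; r, σ)`. -/
theorem stmt9 (K : ℕ) (σmax : ℝ) (hσ : 0 < σmax)
    (π1 π0 : Fin K → ℝ)
    (hπ1 : ∀ a, 0 ≤ π1 a) (hπ1sum : (∑ a, π1 a) = 1)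
    (hπ0 : ∀ a, 0 ≤ π0 a) (hπ0sum : (∑ a, π0 a) = 1)
    (hne : π1 ≠ π0)
    (πΔ : Fin K → ℝ) (hπΔ : ∀ a, πΔ a = π1 a - π0 a)
    (Pi : Set (Fin K → ℝ))
    (hPi : ∀ πe ∈ Pi, (∀ a, 0 ≤ πe a) ∧ (∑ a, πe a) = 1 ∧
      ∀ a, πΔ a ≠ 0 → 0 < πe a)
    (ν : (Fin K → ℝ) → (Fin K → ℝ) → (Fin K → ℝ) → ℝ)
    (hν : ∀ πe r σ, ν πe r σ =
      (∑ a ∈ univ.filter (fun a => πΔ a ≠ 0),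
          (πΔ a) ^ 2 / πe a * ((σ a) ^ 2 + (r a) ^ 2))
        - (∑ a, πΔ a * r a) ^ 2)
    (πestar : Fin K → ℝ) (hstar : πestar ∈ Pi)
    (hmin : ∀ πe ∈ Pi,
      (∑ a ∈ univ.filter (fun a => πΔ a ≠ 0), (πΔ a) ^ 2 / πestar a)
        ≤ ∑ a ∈ univ.filter (fun a => πΔ a ≠ 0), (πΔ a) ^ 2 / πe a) :
    ∀ πe ∈ Pi,
      sSup {v : ℝ | ∃ r σ : Fin K → ℝ, (∀ a, 0 ≤ r a ∧ r a ≤ 1) ∧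
          (∀ a, 0 ≤ σ a ∧ σ a ≤ σmax) ∧ v = ν πestar r σ}
        ≤ sSup {v : ℝ | ∃ r σ : Fin K → ℝ, (∀ a, 0 ≤ r a ∧ r a ≤ 1) ∧
          (∀ a, 0 ≤ σ a ∧ σ a ≤ σmax) ∧ v = ν πe r σ} :=
  stmt9_general K σmax hσ π1 π0 hπ1sum hπ0sum πΔ hπΔ Pi hPi ν hν πestar hstar hmin
end

section
/- Suppose π_1 ≠ π_0. For any exploration policy π_e positive on the support of π_Δ, there exist an instance (r, {σ_a}) and an alternative policy b' such that ν(π_e; r, {σ_a}) > ν(b'; r, {σ_a}). In other words, no single policy minimizes the IPW variance simultaneously across all instances. -/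
open Finset

/-!
Put all the noise on one arm `a₀` of the support of `π_Δ` and make the rewards zero. Then
`ν(b) = π_Δ(a₀)² / b(a₀)`, which strictly decreases as `b` moves mass onto `a₀`. Because
`∑ π_Δ = 0`, the support of `π_Δ` has a second arm, where `π_e` is positive, so `π_e(a₀) < 1` and
the midpoint of `π_e` and the point mass at `a₀` does strictly better.
-/

lemma midpoint_single_apply {ι : Type*} [DecidableEq ι] (p : ι → ℝ) (a₀ a : ι) :
    midpoint ℝ p (Pi.single a₀ 1) a = (p a + (Pi.single a₀ 1 : ι → ℝ) a) / 2 := by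
  rw [midpoint_eq_smul_add]
  simp only [Pi.smul_apply, Pi.add_apply, smul_eq_mul, invOf_eq_inv]
  ring

section

variable {ι : Type*} [Fintype ι]

noncomputable def ipwVariance (πΔ πe r σ : ι → ℝ) : ℝ :=
  (∑ a ∈ univ.filter (fun a => πΔ a ≠ 0), πΔ a ^ 2 / πe a * (σ a ^ 2 + r a ^ 2))
    - (∑ a, πΔ a * r a) ^ 2

lemma ipwVariance_zero_single [DecidableEq ι] {πΔ : ι → ℝ} {a₀ : ι} (h : πΔ a₀ ≠ 0)
    (πe : ι → ℝ) : ipwVariance πΔ πe 0 (Pi.single a₀ 1) = πΔ a₀ ^ 2 / πe a₀ := by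
  rw [ipwVariance, sum_eq_single_of_mem a₀ (by simpa using h)]
  · simp
  · intro a _ ha
    simp [ha]

lemma exists_ne_apply_ne_zero_of_sum_eq_zero {M : Type*} [AddCommMonoid M] {f : ι → M}
    (hsum : ∑ a, f a = 0) {a₀ : ι} (h : f a₀ ≠ 0) : ∃ a₁ ≠ a₀, f a₁ ≠ 0 := by
  classical
  have hrest : ∑ a ∈ univ.erase a₀, f a ≠ 0 := by
    intro hzero
    rw [← add_sum_erase univ f (mem_univ a₀), hzero, add_zero] at hsum
    exact h hsum
  obtain ⟨a₁, ha₁, hf⟩ := exists_ne_zero_of_sum_ne_zero hrest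
  exact ⟨a₁, ne_of_mem_erase ha₁, hf⟩

lemma apply_lt_one_of_mem_stdSimplex {p : ι → ℝ} (hp : p ∈ stdSimplex ℝ ι) {a₀ a₁ : ι}
    (hne : a₁ ≠ a₀) (h₁ : 0 < p a₁) : p a₀ < 1 :=
  hp.2 ▸ single_lt_sum hne (mem_univ _) (mem_univ _) h₁ fun k _ _ => hp.1 k

lemma exists_ipwVariance_lt {πΔ πe : ι → ℝ} (hsum : ∑ a, πΔ a = 0) (hne : πΔ ≠ 0)
    (hπe : πe ∈ stdSimplex ℝ ι) (hpos : ∀ a, πΔ a ≠ 0 → 0 < πe a) :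
    ∃ r σ b : ι → ℝ, (∀ a, 0 ≤ r a ∧ r a ≤ 1) ∧ (∀ a, 0 ≤ σ a) ∧ b ∈ stdSimplex ℝ ι ∧
      (∀ a, πΔ a ≠ 0 → 0 < b a) ∧ ipwVariance πΔ b r σ < ipwVariance πΔ πe r σ := by
  classical
  obtain ⟨a₀, ha₀⟩ : ∃ a, πΔ a ≠ 0 := Function.ne_iff.mp hne
  obtain ⟨a₁, ha₁₀, ha₁⟩ := exists_ne_apply_ne_zero_of_sum_eq_zero hsum ha₀
  have hlt_one : πe a₀ < 1 := apply_lt_one_of_mem_stdSimplex hπe ha₁₀ (hpos a₁ ha₁)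
  have hsingle : (0 : ι → ℝ) ≤ Pi.single a₀ 1 := Pi.single_nonneg.mpr zero_le_one
  set b := midpoint ℝ πe (Pi.single a₀ 1)
  have hb_apply : ∀ a, b a = (πe a + (Pi.single a₀ 1 : ι → ℝ) a) / 2 :=
    midpoint_single_apply πe a₀
  have hb : b ∈ stdSimplex ℝ ι :=
    (convex_stdSimplex ℝ ι).midpoint_mem hπe (single_mem_stdSimplex ℝ a₀)
  have hb_lower : ∀ a, πe a / 2 ≤ b a := fun a => by
    rw [hb_apply]
    gcongr
    exact le_add_of_nonneg_right (hsingle a)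
  have hb_a₀ : πe a₀ < b a₀ := by
    rw [hb_apply, Pi.single_eq_same]
    linarith
  refine ⟨0, Pi.single a₀ 1, b, fun _ => ⟨le_rfl, zero_le_one⟩, hsingle, hb,
    fun a ha => (half_pos (hpos a ha)).trans_le (hb_lower a), ?_⟩
  rw [ipwVariance_zero_single ha₀, ipwVariance_zero_single ha₀]
  exact div_lt_div_of_pos_left (by positivity) (hpos a₀ ha₀) hb_a₀

end

theorem stmt11_general (K : ℕ) (π1 π0 : Fin K → ℝ)
    (hπ1sum : (∑ a, π1 a) = 1)
    (hπ0sum : (∑ a, π0 a) = 1)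
    (hne : π1 ≠ π0)
    (πΔ : Fin K → ℝ) (hπΔ : ∀ a, πΔ a = π1 a - π0 a)
    (ν : (Fin K → ℝ) → (Fin K → ℝ) → (Fin K → ℝ) → ℝ)
    (hν : ∀ πe r σ, ν πe r σ =
      (∑ a ∈ univ.filter (fun a => πΔ a ≠ 0),
          (πΔ a) ^ 2 / πe a * ((σ a) ^ 2 + (r a) ^ 2))
        - (∑ a, πΔ a * r a) ^ 2)
    (πe : Fin K → ℝ) (hπe0 : ∀ a, 0 ≤ πe a) (hπesum : (∑ a, πe a) = 1)
    (hpos : ∀ a, πΔ a ≠ 0 → 0 < πe a) :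
    ∃ (r σ b' : Fin K → ℝ),
      (∀ a, 0 ≤ r a ∧ r a ≤ 1) ∧ (∀ a, 0 ≤ σ a) ∧
      (∀ a, 0 ≤ b' a) ∧ (∑ a, b' a) = 1 ∧ (∀ a, πΔ a ≠ 0 → 0 < b' a) ∧
      ν b' r σ < ν πe r σ := by
  have hπΔ_eq : πΔ = π1 - π0 := funext hπΔ
  have hsum : ∑ a, πΔ a = 0 := by
    simp only [hπΔ_eq, Pi.sub_apply, sum_sub_distrib, hπ1sum, hπ0sum, sub_self]
  have hπΔ_ne : πΔ ≠ 0 := by rwa [hπΔ_eq, sub_ne_zero]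
  obtain ⟨r, σ, b, hr, hσ, hb, hb_pos, hlt⟩ :=
    exists_ipwVariance_lt hsum hπΔ_ne ⟨hπe0, hπesum⟩ hpos
  exact ⟨r, σ, b, hr, hσ, hb.1, hb.2, hb_pos, by rw [hν, hν]; exact hlt⟩

/-- No single exploration policy dominates all instances: if `π_1 ≠ π_0`,
then for any feasible `π_e` there exist an instance `(r, σ)` and a feasible
policy `b'` with strictly smaller IPW variance `ν`. -/
theorem stmt11 (K : ℕ) (π1 π0 : Fin K → ℝ)
    (hπ1 : ∀ a, 0 ≤ π1 a) (hπ1sum : (∑ a, π1 a) = 1)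
    (hπ0 : ∀ a, 0 ≤ π0 a) (hπ0sum : (∑ a, π0 a) = 1)
    (hne : π1 ≠ π0)
    (πΔ : Fin K → ℝ) (hπΔ : ∀ a, πΔ a = π1 a - π0 a)
    (ν : (Fin K → ℝ) → (Fin K → ℝ) → (Fin K → ℝ) → ℝ)
    (hν : ∀ πe r σ, ν πe r σ =
      (∑ a ∈ univ.filter (fun a => πΔ a ≠ 0),
          (πΔ a) ^ 2 / πe a * ((σ a) ^ 2 + (r a) ^ 2))
        - (∑ a, πΔ a * r a) ^ 2)
    (πe : Fin K → ℝ) (hπe0 : ∀ a, 0 ≤ πe a) (hπesum : (∑ a, πe a) = 1)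
    (hpos : ∀ a, πΔ a ≠ 0 → 0 < πe a) :
    ∃ (r σ b' : Fin K → ℝ),
      (∀ a, 0 ≤ r a ∧ r a ≤ 1) ∧ (∀ a, 0 ≤ σ a) ∧
      (∀ a, 0 ≤ b' a) ∧ (∑ a, b' a) = 1 ∧ (∀ a, πΔ a ≠ 0 → 0 < b' a) ∧
      ν b' r σ < ν πe r σ :=
  stmt11_general K π1 π0 hπ1sum hπ0sum hne πΔ hπΔ ν hν πe hπe0 hπesum hpos
end

section
/- Let a', a'' be arms with π_Δ(a') ≠ 0 ≠ π_Δ(a''), and π_e a policy with π_e(a'), π_e(a'') > 0. Define b' by b'(a') = π_e(a')/2, b'(a'') = π_e(a')/2 + π_e(a''), and b'(a) = π_e(a) otherwise. Then b' is a probability vector, and for the instance with r ≡ 0, σ_{a'} = 0, σ_{a''} = 1, σ_a = 0 for other a, we have ν(π_e) − ν(b') = (1/π_e(a'') − 1/(π_e(a')/2 + π_e(a''))) π_Δ(a'')² > 0. -/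
open Finset

theorem Finset.sum_transfer {ι M : Type*} [Fintype ι] [DecidableEq ι] [AddCommGroup M]
    {f g : ι → M} {i j : ι} (hij : i ≠ j) (t : M)
    (hg : ∀ a, g a = if a = i then f i - t else if a = j then f j + t else f a) :
    ∑ a, g a = ∑ a, f a := by
  have hg' : g = f + Pi.single j t - Pi.single i t := by
    funext a
    rw [hg a]
    by_cases hai : a = i
    · subst hai; simp [hij]
    · by_cases haj : a = j
      · subst haj; simp [hai]
      · simp [hai, haj]
  simp [hg', sum_add_distrib, sum_sub_distrib]

theorem sum_filter_sq_mul_sq_div_of_eq_ite {ι : Type*} [Fintype ι] [DecidableEq ι]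
    {d σ : ι → ℝ} {j : ι} (hdj : d j ≠ 0) (hσ : ∀ a, σ a = if a = j then 1 else 0)
    (π : ι → ℝ) :
    ∑ a ∈ univ.filter (fun a => d a ≠ 0), d a ^ 2 * σ a ^ 2 / π a = d j ^ 2 / π j := by
  rw [sum_eq_single_of_mem j (by simp [hdj])]
  · simp [hσ]
  · intro a _ haj
    simp [hσ, haj]

theorem stmt12_general (K : ℕ)
    (πΔ : Fin K → ℝ)
    (a' a'' : Fin K) (hdiff : a' ≠ a'')
    (hΔ'' : πΔ a'' ≠ 0)
    (πe : Fin K → ℝ) (hπe0 : ∀ a, 0 ≤ πe a) (hπesum : (∑ a, πe a) = 1)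
    (hpos' : 0 < πe a') (hpos'' : 0 < πe a'')
    (b' : Fin K → ℝ)
    (hb' : ∀ a, b' a = if a = a' then πe a' / 2
      else if a = a'' then πe a' / 2 + πe a'' else πe a)
    (σ : Fin K → ℝ) (hσ : ∀ a, σ a = if a = a'' then 1 else 0)
    (ν : (Fin K → ℝ) → ℝ)
    (hν : ∀ π, ν π = ∑ a ∈ univ.filter (fun a => πΔ a ≠ 0),
      (πΔ a) ^ 2 * (σ a) ^ 2 / π a) :
    ((∀ a, 0 ≤ b' a) ∧ (∑ a, b' a) = 1) ∧
    ν πe - ν b' = (1 / πe a'' - 1 / (πe a' / 2 + πe a'')) * (πΔ a'') ^ 2 ∧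
    0 < ν πe - ν b' := by
  have hν_single (π : Fin K → ℝ) : ν π = πΔ a'' ^ 2 / π a'' := by
    rw [hν, sum_filter_sq_mul_sq_div_of_eq_ite hΔ'' hσ]
  have hb'a'' : b' a'' = πe a' / 2 + πe a'' := by simp [hb', hdiff.symm]
  have hgap : ν πe - ν b' = (1 / πe a'' - 1 / (πe a' / 2 + πe a'')) * πΔ a'' ^ 2 := by
    rw [hν_single, hν_single, hb'a'']
    ring
  have hb'_nonneg (a : Fin K) : 0 ≤ b' a := by
    rw [hb']
    split_ifs
    · positivity
    · positivity
    · exact hπe0 a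
  have hb'_sum : ∑ a, b' a = 1 := by
    rw [Finset.sum_transfer hdiff (πe a' / 2) (fun a => by rw [hb']; split_ifs <;> ring),
      hπesum]
  refine ⟨⟨hb'_nonneg, hb'_sum⟩, hgap, hgap ▸ mul_pos ?_ (by positivity)⟩
  exact sub_pos.2 (one_div_lt_one_div_of_lt hpos'' (by linarith))

/-- Explicit counter-example construction: moving mass from arm `a'` to the
high-variance arm `a''` strictly decreases the IPW variance on the instance
with `r ≡ 0`, `σ_{a''} = 1` and `σ = 0` elsewhere. -/
theorem stmt12 (K : ℕ) (π1 π0 : Fin K → ℝ)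
    (hπ1 : ∀ a, 0 ≤ π1 a) (hπ1sum : (∑ a, π1 a) = 1)
    (hπ0 : ∀ a, 0 ≤ π0 a) (hπ0sum : (∑ a, π0 a) = 1)
    (hne : π1 ≠ π0)
    (πΔ : Fin K → ℝ) (hπΔ : ∀ a, πΔ a = π1 a - π0 a)
    (a' a'' : Fin K) (hdiff : a' ≠ a'')
    (hΔ' : πΔ a' ≠ 0) (hΔ'' : πΔ a'' ≠ 0)
    (πe : Fin K → ℝ) (hπe0 : ∀ a, 0 ≤ πe a) (hπesum : (∑ a, πe a) = 1)
    (hpos' : 0 < πe a') (hpos'' : 0 < πe a'')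
    (b' : Fin K → ℝ)
    (hb' : ∀ a, b' a = if a = a' then πe a' / 2
      else if a = a'' then πe a' / 2 + πe a'' else πe a)
    (σ : Fin K → ℝ) (hσ : ∀ a, σ a = if a = a'' then 1 else 0)
    (ν : (Fin K → ℝ) → ℝ)
    (hν : ∀ π, ν π = ∑ a ∈ univ.filter (fun a => πΔ a ≠ 0),
      (πΔ a) ^ 2 * (σ a) ^ 2 / π a) :
    ((∀ a, 0 ≤ b' a) ∧ (∑ a, b' a) = 1) ∧
    ν πe - ν b' = (1 / πe a'' - 1 / (πe a' / 2 + πe a'')) * (πΔ a'') ^ 2 ∧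
    0 < ν πe - ν b' :=
  stmt12_general K πΔ a' a'' hdiff hΔ'' πe hπe0 hπesum hpos' hpos'' b' hb' σ hσ ν hν
end
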